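/- Let A = GF(p) with p prime and k ∈ ℕ. If f : A^n → A has reduced polynomial of degree exactly k, then the smallest L-stable class containing f equals D_k, the class of all operations on A of degree at most k. -/

import Mathlib

/-- A finitary operation, with positive arity. -/
abbrev OpSig (A B : Type*) := Σ n : ℕ, (Fin (n + 1) → A) → B

/-- Composition of function classes. -/
def classComp {A B C : Type*} (F : Set (OpSig B C)) (K : Set (OpSig A B)) :
    Set (OpSig A C) :=
  { h | ∃ (n m : ℕ) (f : (Fin (n + 1) → B) → C)
      (g : Fin (n + 1) → (Fin (m + 1) → A) → B),
      (⟨n, f⟩ : OpSig B C) ∈ F ∧ (∀ i, (⟨m, g i⟩ : OpSig A B) ∈ K) ∧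
      h = ⟨m, fun a => f fun i => g i a⟩ }

/-- `f` has degree at most `k`: it is represented by a polynomial of
total degree at most `k`. -/
def HasDegLE {F : Type*} [CommSemiring F] {n : ℕ} (f : (Fin n → F) → F)
    (k : ℕ) : Prop :=
  ∃ q : MvPolynomial (Fin n) F, q.totalDegree ≤ k ∧ ∀ a, MvPolynomial.eval a q = f a

/-- The class `D_k` of operations of degree at most `k`. -/
def degClass (F : Type*) [CommSemiring F] (k : ℕ) : Set (OpSig F F) :=
  { g | HasDegLE g.2 k }

/-- The clone `L` of affine operations. -/
def affineClass (F : Type*) [CommSemiring F] : Set (OpSig F F) :=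
  degClass F 1

/-!
`D_k` is `L`-stable and contains `f`, which gives one inclusion. Conversely, let `K` be
`L`-stable with `f ∈ K`. Reduce the polynomial of `f` modulo `x ^ p = x` and pick a monomial
`x ^ d` of top degree `k`; then `d i < p` for all `i`. For `e : Fin k → Fin (n + 1)` with
fibres of sizes `d`, the signed sum
`∑_{T ⊆ Fin k} (-1) ^ |T| f (i ↦ ∑_{j ∈ T, e j = i} y j)`
kills every monomial of degree `≤ k` except `x ^ d`, and equals
`(-1) ^ k · coeff d · ∏ (d i)! · y 0 ⋯ y (k - 1)`. Since the factorials are units mod `p`,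
the product of `k` variables is an affine combination of affine substitutions into `f`,
so it lies in `K`. Substituting variables and the constant `1` into this product gives every
monomial of degree `≤ k`, and their linear combinations give all of `D_k`.
-/

open MvPolynomial Finset

theorem MvPolynomial.sum_le_totalDegree {σ R : Type*} [Fintype σ] [CommSemiring R]
    {q : MvPolynomial σ R} {d : σ →₀ ℕ} (hd : d ∈ q.support) : ∑ i, d i ≤ q.totalDegree :=
  (d.sum_fintype _ fun _ => rfl).symm.trans_le (le_totalDegree hd)

theorem MvPolynomial.exists_mem_support_sum_eq_totalDegree {σ R : Type*} [Fintype σ]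
    [CommSemiring R] {q : MvPolynomial σ R} (hq : q ≠ 0) :
    ∃ d ∈ q.support, ∑ i, d i = q.totalDegree := by
  obtain ⟨d, hd, hdq⟩ := exists_mem_eq_sup q.support (support_nonempty.2 hq)
    fun s => s.sum fun _ e => e
  exact ⟨d, hd, (d.sum_fintype _ fun _ => rfl).symm.trans hdq.symm⟩

section HasDegLE

variable {F : Type*} [CommSemiring F] {n m k l : ℕ}

theorem hasDegLE_const (c : F) : HasDegLE (fun _ : Fin n → F => c) 0 :=
  ⟨C c, by rw [totalDegree_C], fun _ => eval_C c⟩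

theorem hasDegLE_apply (i : Fin n) : HasDegLE (fun a : Fin n → F => a i) 1 :=
  ⟨X i, (totalDegree_monomial_le _ _).trans (by simp), fun _ => eval_X _⟩

theorem HasDegLE.mono {f : (Fin n → F) → F} (hf : HasDegLE f k) (hkl : k ≤ l) :
    HasDegLE f l :=
  let ⟨q, hq, hqf⟩ := hf
  ⟨q, hq.trans hkl, hqf⟩

theorem HasDegLE.add {f g : (Fin n → F) → F} (hf : HasDegLE f k) (hg : HasDegLE g k) :
    HasDegLE (fun a => f a + g a) k :=
  let ⟨q, hq, hqf⟩ := hf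
  let ⟨r, hr, hrg⟩ := hg
  ⟨q + r, (totalDegree_add q r).trans (max_le hq hr), fun a => by simp [hqf, hrg]⟩

theorem HasDegLE.mul {f g : (Fin n → F) → F} (hf : HasDegLE f k) (hg : HasDegLE g l) :
    HasDegLE (fun a => f a * g a) (k + l) :=
  let ⟨q, hq, hqf⟩ := hf
  let ⟨r, hr, hrg⟩ := hg
  ⟨q * r, (totalDegree_mul q r).trans (add_le_add hq hr), fun a => by simp [hqf, hrg]⟩

theorem HasDegLE.sum {ι : Type*} (s : Finset ι) {f : ι → (Fin n → F) → F}
    (hf : ∀ i ∈ s, HasDegLE (f i) k) : HasDegLE (fun a => ∑ i ∈ s, f i a) k := by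
  classical
  induction s using Finset.induction_on with
  | empty => simpa using (hasDegLE_const (0 : F)).mono (Nat.zero_le k)
  | insert i s hi ih =>
    simp only [sum_insert hi]
    exact (hf i (mem_insert_self i s)).add (ih fun j hj => hf j (mem_insert_of_mem hj))

theorem HasDegLE.comp {g : (Fin n → F) → F} (hg : HasDegLE g k)
    {σ : Fin n → (Fin m → F) → F} (hσ : ∀ i, HasDegLE (σ i) l) :
    HasDegLE (fun a => g fun i => σ i a) (k * l) := by
  obtain ⟨q, hq, hqg⟩ := hg
  choose r hr hrσ using hσ
  refine ⟨bind₁ r q, ?_, fun a => ?_⟩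
  · conv_lhs => rw [as_sum q, map_sum]
    refine (totalDegree_finsetSum _ _).trans (Finset.sup_le fun d hd => ?_)
    rw [bind₁_monomial]
    refine (totalDegree_mul _ _).trans ?_
    rw [totalDegree_C, zero_add]
    refine (totalDegree_finsetProd _ _).trans ?_
    calc ∑ i ∈ d.support, (r i ^ d i).totalDegree
        ≤ ∑ i ∈ d.support, d i * l :=
          Finset.sum_le_sum fun i _ => (totalDegree_pow _ _).trans (Nat.mul_le_mul_left _ (hr i))
      _ = (d.sum fun _ e => e) * l := by rw [Finsupp.sum, Finset.sum_mul]
      _ ≤ k * l := Nat.mul_le_mul_right _ ((le_totalDegree hd).trans hq)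
  · simp only [← hqg, ← hrσ]
    exact eval₂Hom_bind₁ (RingHom.id F) a r q

theorem hasDegLE_zero_iff {g : (Fin n → F) → F} : HasDegLE g 0 ↔ ∃ c, g = fun _ => c := by
  constructor
  · rintro ⟨q, hq, hqg⟩
    rw [totalDegree_eq_zero_iff_eq_C.mp (Nat.le_zero.mp hq)] at hqg
    exact ⟨_, funext fun a => (hqg a).symm.trans (eval_C _)⟩
  · rintro ⟨c, rfl⟩
    exact hasDegLE_const c

end HasDegLE

theorem exists_fiber_card_eq {τ : Type*} [Fintype τ] [DecidableEq τ] (a : τ → ℕ) {k : ℕ}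
    (hk : ∑ i, a i = k) : ∃ e : Fin k → τ, ∀ i, #{j | e j = i} = a i := by
  obtain ⟨E⟩ : Nonempty (Fin k ≃ Σ i, Fin (a i)) := ⟨Fintype.equivOfCardEq (by simp [hk])⟩
  refine ⟨fun j => (E j).1, fun i => ?_⟩
  rw [← Fintype.card_subtype, Fintype.card_congr ((E.subtypeEquiv fun _ => Iff.rfl).trans
    (Equiv.sigmaSubtype i)), Fintype.card_fin]

section LStable

variable {F : Type*} [CommSemiring F]

structure IsLStable (K : Set (OpSig F F)) : Prop where
  comp_affine : classComp K (affineClass F) ⊆ K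
  affine_comp : classComp (affineClass F) K ⊆ K

theorem isLStable_degClass (k : ℕ) : IsLStable (degClass F k) where
  comp_affine := by
    rintro _ ⟨n, m, g, σ, hg, hσ, rfl⟩
    simpa [degClass] using HasDegLE.comp (l := 1) (σ := σ) hg hσ
  affine_comp := by
    rintro _ ⟨n, m, g, σ, hg, hσ, rfl⟩
    simpa [degClass] using HasDegLE.comp (k := 1) (σ := σ) hg hσ

namespace IsLStable

variable {K : Set (OpSig F F)} (hK : IsLStable K)
include hK

theorem comp_mem {n m : ℕ} {g : (Fin (n + 1) → F) → F} (hg : ⟨n, g⟩ ∈ K)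
    {σ : Fin (n + 1) → (Fin (m + 1) → F) → F} (hσ : ∀ i, HasDegLE (σ i) 1) :
    ⟨m, fun a => g fun i => σ i a⟩ ∈ K :=
  hK.comp_affine ⟨n, m, g, σ, hg, hσ, rfl⟩

theorem const_mem (hne : K.Nonempty) (m : ℕ) (c : F) : ⟨m, fun _ => c⟩ ∈ K := by
  obtain ⟨⟨n, g⟩, hg⟩ := hne
  have hg0 : ⟨m, fun _ => g fun _ => 0⟩ ∈ K :=
    hK.comp_mem hg fun _ => (hasDegLE_const 0).mono zero_le_one
  exact hK.affine_comp
    ⟨0, m, fun _ => c, fun _ _ => g fun _ => 0, (hasDegLE_const c).mono zero_le_one,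
      fun _ => hg0, rfl⟩

theorem mul_add_mem {m : ℕ} {g h : (Fin (m + 1) → F) → F} (hg : ⟨m, g⟩ ∈ K) (hh : ⟨m, h⟩ ∈ K)
    (c : F) : ⟨m, fun a => c * g a + h a⟩ ∈ K :=
  hK.affine_comp
    ⟨1, m, fun v => c * v 0 + v 1, ![g, h],
      ((hasDegLE_const c).mul (hasDegLE_apply 0)).add (hasDegLE_apply 1),
      Fin.forall_fin_two.2 ⟨hg, hh⟩, rfl⟩

theorem sum_mul_mem (hne : K.Nonempty) {ι : Type*} (s : Finset ι) (c : ι → F) {m : ℕ}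
    {g : ι → (Fin (m + 1) → F) → F} (hg : ∀ i ∈ s, ⟨m, g i⟩ ∈ K) :
    ⟨m, fun a => ∑ i ∈ s, c i * g i a⟩ ∈ K := by
  classical
  induction s using Finset.induction_on with
  | empty => simpa using hK.const_mem hne m 0
  | insert i s hi ih =>
    simp only [sum_insert hi]
    exact hK.mul_add_mem (hg i (mem_insert_self i s))
      (ih fun j hj => hg j (mem_insert_of_mem hj)) (c i)

theorem monomial_mem {k : ℕ} (hprod : ⟨k, fun a => ∏ j, a j⟩ ∈ K) {m : ℕ}
    (d : Fin (m + 1) → ℕ) (hd : ∑ i, d i ≤ k + 1) : ⟨m, fun a => ∏ i, a i ^ d i⟩ ∈ K := by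
  classical
  -- the extra fibre `none` is sent to the constant `1`, padding the degree up to `k + 1`
  obtain ⟨e, he⟩ := exists_fiber_card_eq (k := k + 1)
    (fun o : Option (Fin (m + 1)) => o.elim (k + 1 - ∑ i, d i) d)
    (by rw [Fintype.sum_option]; simp only [Option.elim]; omega)
  have hσ : ∀ t, HasDegLE (fun a : Fin (m + 1) → F => (e t).elim 1 a) 1 := fun t => by
    cases e t with
    | none => exact (hasDegLE_const 1).mono zero_le_one
    | some i => exact hasDegLE_apply i
  convert hK.comp_mem hprod hσ using 3 with a
  rw [← Finset.prod_fiberwise' univ e (fun o => o.elim 1 a), Fintype.prod_option]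
  simp_rw [prod_const, he]
  simp

theorem degClass_succ_subset (hne : K.Nonempty) {k : ℕ} (hprod : ⟨k, fun a => ∏ j, a j⟩ ∈ K) :
    degClass F (k + 1) ⊆ K := by
  rintro ⟨m, g⟩ (⟨q, hq, hqg⟩ : HasDegLE g (k + 1))
  obtain rfl : g = fun a => ∑ d ∈ q.support, coeff d q * ∏ i, a i ^ d i :=
    funext fun a => by rw [← hqg, eval_eq']
  exact hK.sum_mul_mem hne _ _ fun d hd =>
    hK.monomial_mem hprod d ((sum_le_totalDegree hd).trans hq)

end IsLStable

end LStable

section Polarization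

variable {R : Type*} [CommRing R]

open Nat in
theorem sum_powerset_neg_one_pow_mul_sum_pow {ι : Type*} [DecidableEq ι] (y : ι → R)
    (B : Finset ι) {b : ℕ} (hb : b ≤ #B) :
    ∑ S ∈ B.powerset, (-1) ^ #S * (∑ j ∈ S, y j) ^ b
      = if b = #B then (-1) ^ b * b ! * ∏ j ∈ B, y j else 0 := by
  induction B using Finset.induction_on generalizing b with
  | empty =>
    obtain rfl : b = 0 := by simpa using hb
    simp
  | insert a B ha ih =>
    rw [card_insert_of_notMem ha] at hb ⊢
    have hins : ∀ S ∈ B.powerset, (-1) ^ #(insert a S) * (∑ j ∈ insert a S, y j) ^ b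
        = -∑ t ∈ range (b + 1),
            (b.choose t : R) * y a ^ t * ((-1) ^ #S * (∑ j ∈ S, y j) ^ (b - t)) := by
      intro S hS
      have haS : a ∉ S := fun h => ha (mem_powerset.1 hS h)
      rw [card_insert_of_notMem haS, sum_insert haS, add_pow, mul_sum, ← sum_neg_distrib]
      exact sum_congr rfl fun t _ => by ring
    -- after the binomial expansion of `(y a + ∑ j ∈ S, y j) ^ b`, the `t = 0` terms cancel
    have hsplit : ∑ S ∈ (insert a B).powerset, (-1) ^ #S * (∑ j ∈ S, y j) ^ b
        = -∑ t ∈ range b, (b.choose (t + 1) : R) * y a ^ (t + 1) *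
            ∑ S ∈ B.powerset, (-1) ^ #S * (∑ j ∈ S, y j) ^ (b - (t + 1)) := by
      rw [sum_powerset_insert ha, sum_congr rfl hins, sum_neg_distrib, sum_comm, sum_range_succ']
      simp only [← mul_sum]
      simp
    rw [hsplit, sum_congr rfl fun t ht => by rw [ih (by omega)]]
    split_ifs with hbB
    · subst hbB
      rw [sum_eq_single 0 (fun t ht ht0 => by
        rw [if_neg (by have := mem_range.1 ht; omega : #B + 1 - (t + 1) ≠ #B), mul_zero])
        (by simp), if_pos (by omega), prod_insert ha, factorial_succ, choose_one_right]
      push_cast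
      ring
    · refine neg_eq_zero.2 (sum_eq_zero fun t ht => ?_)
      rw [if_neg (by have := mem_range.1 ht; omega : b - (t + 1) ≠ #B), mul_zero]

theorem sum_powerset_union {ι M : Type*} [DecidableEq ι] [AddCommMonoid M] {A C : Finset ι}
    (h : Disjoint A C) (f : Finset ι → M) :
    ∑ T ∈ (A ∪ C).powerset, f T = ∑ T₁ ∈ A.powerset, ∑ T₂ ∈ C.powerset, f (T₁ ∪ T₂) := by
  induction A using Finset.induction_on generalizing f with
  | empty => simp
  | insert a A ha ih =>
    rw [disjoint_insert_left] at h
    rw [insert_union, sum_powerset_insert (by simp [ha, h.1]), ih h.2, ih h.2,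
      sum_powerset_insert ha]
    simp only [insert_union]

theorem sum_powerset_biUnion_prod_inter {ι κ : Type*} [DecidableEq ι] [DecidableEq κ]
    {s : Finset κ} {B : κ → Finset ι} (hB : (s : Set κ).PairwiseDisjoint B)
    (φ : κ → Finset ι → R) :
    ∑ T ∈ (s.biUnion B).powerset, ∏ i ∈ s, φ i (T ∩ B i)
      = ∏ i ∈ s, ∑ S ∈ (B i).powerset, φ i S := by
  induction s using Finset.induction_on with
  | empty => simp
  | insert a s ha ih =>
    have hBs : (s : Set κ).PairwiseDisjoint B := hB.subset (by simp)
    have hBa : ∀ i ∈ s, Disjoint (B a) (B i) := fun i hi =>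
      hB (by simp) (by simp [hi]) fun h => ha (h ▸ hi)
    have hBa' : Disjoint (B a) (s.biUnion B) := (disjoint_biUnion_right _ _ _).2 hBa
    rw [biUnion_insert, sum_powerset_union hBa', prod_insert ha, ← ih hBs, sum_mul_sum]
    refine sum_congr rfl fun T₁ hT₁ => sum_congr rfl fun T₂ hT₂ => ?_
    rw [mem_powerset] at hT₁ hT₂
    rw [prod_insert ha, union_inter_distrib_right, inter_eq_left.2 hT₁,
      disjoint_iff_inter_eq_empty.1 (hBa'.symm.mono_left hT₂), union_empty]
    congr 1
    refine prod_congr rfl fun i hi => ?_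
    rw [union_inter_distrib_right, disjoint_iff_inter_eq_empty.1 ((hBa i hi).mono_left hT₁),
      empty_union]

open Nat in
theorem sum_neg_one_pow_mul_prod_sum_fiber_pow {τ ι : Type*} [Fintype τ] [Fintype ι]
    [DecidableEq τ] [DecidableEq ι] {e : ι → τ} {d : τ → ℕ} (he : ∀ i, #{j | e j = i} = d i)
    {d' : τ → ℕ} (hd' : ∑ i, d' i ≤ Fintype.card ι) (y : ι → R) :
    ∑ T : Finset ι, (-1) ^ #T * ∏ i, (∑ j ∈ T with e j = i, y j) ^ d' i
      = if d' = d then (-1) ^ Fintype.card ι * (∏ i, (d i)! : ℕ) * ∏ j, y j else 0 := by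
  set B : τ → Finset ι := fun i => {j | e j = i}
  have hB : ((univ : Finset τ) : Set τ).PairwiseDisjoint B := fun i _ i' _ hii' =>
    disjoint_filter.2 fun j _ hi hi' => hii' (hi.symm.trans hi')
  have hBT : ∀ T i, ({j ∈ T | e j = i} : Finset ι) = T ∩ B i := fun T i => by ext; simp [B]
  have hcard : ∀ T : Finset ι, #T = ∑ i, #{j ∈ T | e j = i} := fun T =>
    card_eq_sum_card_fiberwise fun j _ => mem_univ (e j)
  have hd : ∑ i, d i = Fintype.card ι := by simpa [← he] using (hcard univ).symm
  have hsum : ∑ T : Finset ι, (-1) ^ #T * ∏ i, (∑ j ∈ T with e j = i, y j) ^ d' i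
      = ∏ i, ∑ S ∈ (B i).powerset, (-1) ^ #S * (∑ j ∈ S, y j) ^ d' i := by
    have hU : univ.biUnion B = univ := by ext; simp [B]
    rw [← sum_powerset_biUnion_prod_inter hB, hU, powerset_univ]
    refine sum_congr rfl fun T _ => ?_
    rw [prod_mul_distrib, prod_pow_eq_pow_sum, hcard]
    simp only [hBT]
  rw [hsum]
  split_ifs with hdd
  · subst hdd
    rw [prod_congr rfl fun i _ => by
      rw [sum_powerset_neg_one_pow_mul_sum_pow y (B i) (he i).ge, if_pos (he i).symm]]
    rw [prod_mul_distrib, prod_mul_distrib, prod_pow_eq_pow_sum, hd, Nat.cast_prod,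
      prod_fiberwise univ e y]
  · obtain ⟨i, hi⟩ : ∃ i, d' i < d i := by
      by_contra! h
      refine hdd (funext fun i => ?_)
      exact ((sum_eq_sum_iff_of_le fun i _ => h i).1
        (le_antisymm (sum_le_sum fun i _ => h i) (hd ▸ hd')) i (mem_univ i)).symm
    refine prod_eq_zero (mem_univ i) ?_
    rw [sum_powerset_neg_one_pow_mul_sum_pow y (B i) ((he i).symm ▸ hi.le),
      if_neg ((he i).symm ▸ hi.ne)]

open Nat in
theorem sum_neg_one_pow_mul_eval_sum_fiber {τ ι : Type*} [Fintype τ] [Fintype ι]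
    [DecidableEq τ] [DecidableEq ι] {q : MvPolynomial τ R} (hq : q.totalDegree ≤ Fintype.card ι)
    {e : ι → τ} {d : τ →₀ ℕ} (he : ∀ i, #{j | e j = i} = d i) (y : ι → R) :
    ∑ T : Finset ι, (-1) ^ #T * eval (fun i => ∑ j ∈ T with e j = i, y j) q
      = (-1) ^ Fintype.card ι * coeff d q * (∏ i, (d i)! : ℕ) * ∏ j, y j := by
  simp_rw [eval_eq', mul_sum, mul_left_comm _ (coeff _ q)]
  rw [sum_comm]
  simp_rw [← mul_sum]
  rw [sum_congr rfl fun d' hd' => by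
    rw [sum_neg_one_pow_mul_prod_sum_fiber_pow he ((sum_le_totalDegree hd').trans hq)]]
  simp only [DFunLike.coe_fn_eq, mul_ite, mul_zero, sum_ite_eq']
  split_ifs with hd
  · ring
  · rw [notMem_support_iff.1 hd]
    ring

end Polarization

open Nat in
theorem IsLStable.prod_mem {F : Type*} [Field F] {K : Set (OpSig F F)} (hK : IsLStable K)
    {n k : ℕ} {f : (Fin (n + 1) → F) → F} (hf : ⟨n, f⟩ ∈ K) {q : MvPolynomial (Fin (n + 1)) F}
    (hqf : ∀ a, eval a q = f a) (hq : q.totalDegree ≤ k + 1) {d : Fin (n + 1) →₀ ℕ}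
    (hd : d ∈ q.support) (hdk : ∑ i, d i = k + 1) (hfac : ((∏ i, (d i)! : ℕ) : F) ≠ 0) :
    ⟨k, fun a => ∏ j, a j⟩ ∈ K := by
  classical
  obtain ⟨e, he⟩ := exists_fiber_card_eq (fun i => d i) hdk
  set c : F := (-1) ^ (k + 1) * coeff d q * (∏ i, (d i)! : ℕ)
  have hc : c ≠ 0 := mul_ne_zero (mul_ne_zero (by simp) (mem_support_iff.1 hd)) hfac
  have hT : ∀ T ∈ (univ : Finset (Finset (Fin (k + 1)))),
      ⟨k, fun a => f fun i => ∑ j ∈ T with e j = i, a j⟩ ∈ K := fun T _ =>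
    hK.comp_mem hf fun i => HasDegLE.sum _ fun j _ => hasDegLE_apply j
  convert hK.sum_mul_mem ⟨_, hf⟩ univ (fun T => c⁻¹ * (-1) ^ #T) hT using 3 with a
  have hpol := sum_neg_one_pow_mul_eval_sum_fiber (by simpa using hq) he a
  simp only [Fintype.card_fin, hqf] at hpol
  simp_rw [mul_assoc, ← mul_sum, hpol]
  rw [inv_mul_cancel_left₀ hc]

open Nat in
theorem natCast_prod_factorial_ne_zero {F : Type*} [Semiring F] {p : ℕ} [CharP F p]
    (hp : p.Prime) {ι : Type*} (s : Finset ι) {d : ι → ℕ} (hd : ∀ i ∈ s, d i < p) :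
    ((∏ i ∈ s, (d i)! : ℕ) : F) ≠ 0 := by
  rw [Ne, CharP.cast_eq_zero_iff F p, Prime.dvd_finsetProd_iff hp.prime]
  rintro ⟨i, hi, hpd⟩
  exact (hd i hi).not_ge (hp.dvd_factorial.1 hpd)

section Reduction

variable {F : Type*} [Field F] [Fintype F]

/-- The exponent in `0, …, q - 1` to which `t` reduces under `x ^ q = x`. -/
def reduceExp (q t : ℕ) : ℕ := if t = 0 then 0 else (t - 1) % (q - 1) + 1

theorem reduceExp_le (q t : ℕ) : reduceExp q t ≤ t := by
  unfold reduceExp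
  split_ifs
  · omega
  · have := Nat.mod_le (t - 1) (q - 1)
    omega

theorem reduceExp_lt {q : ℕ} (hq : 1 < q) (t : ℕ) : reduceExp q t < q := by
  unfold reduceExp
  split_ifs
  · omega
  · have := Nat.mod_lt (t - 1) (show 0 < q - 1 by omega)
    omega

theorem pow_reduceExp (x : F) (t : ℕ) : x ^ reduceExp (Fintype.card F) t = x ^ t := by
  unfold reduceExp
  split_ifs with ht
  · rw [ht]
  by_cases hx : x = 0
  · rw [hx, zero_pow (by omega), zero_pow ht]
  conv_rhs => rw [← Nat.sub_add_cancel (Nat.one_le_iff_ne_zero.2 ht),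
    ← Nat.mod_add_div (t - 1) (Fintype.card F - 1), pow_add, pow_add, pow_mul,
    FiniteField.pow_card_sub_one_eq_one x hx, one_pow, mul_one, ← pow_add]

theorem MvPolynomial.exists_exponents_lt_card_eval_eq {σ : Type*} (q : MvPolynomial σ F) :
    ∃ r : MvPolynomial σ F, r.totalDegree ≤ q.totalDegree ∧ (∀ a, eval a r = eval a q) ∧
      ∀ d ∈ r.support, ∀ i, d i < Fintype.card F := by
  classical
  let red : (σ →₀ ℕ) → σ →₀ ℕ :=
    Finsupp.mapRange (reduceExp (Fintype.card F)) (by simp [reduceExp])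
  refine ⟨∑ d ∈ q.support, monomial (red d) (coeff d q), ?_, fun a => ?_, fun d hd i => ?_⟩
  · refine (totalDegree_finsetSum _ _).trans (Finset.sup_le fun d hd => ?_)
    refine (totalDegree_monomial_le _ _).trans (le_trans ?_ (le_totalDegree hd))
    rw [Finsupp.sum_mapRange_index fun _ => rfl]
    exact sum_le_sum fun i _ => reduceExp_le _ _
  · conv_rhs => rw [as_sum q]
    simp only [map_sum, eval_monomial]
    refine sum_congr rfl fun d _ => ?_
    rw [Finsupp.prod_mapRange_index (by simp)]
    simp [pow_reduceExp]
  · obtain ⟨d', -, hd'⟩ := mem_biUnion.1 (support_sum hd)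
    rw [mem_singleton.1 (support_monomial_subset hd')]
    exact reduceExp_lt Fintype.one_lt_card _

end Reduction

/-- Over `GF(p)` with `p` prime: if `f` has degree exactly `k`, then the
smallest `L`-stable class containing `f` is `D_k`. -/
theorem lStableClosure_eq_degClass {p : ℕ} [Fact p.Prime] {n k : ℕ}
    (f : (Fin (n + 1) → ZMod p) → ZMod p)
    (h₁ : HasDegLE f k) (h₂ : ∀ j, HasDegLE f j → k ≤ j) :
    ⋂₀ { K : Set (OpSig (ZMod p) (ZMod p)) |
        (classComp K (affineClass (ZMod p)) ⊆ K ∧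
          classComp (affineClass (ZMod p)) K ⊆ K) ∧
        (⟨n, f⟩ : OpSig (ZMod p) (ZMod p)) ∈ K }
      = degClass (ZMod p) k := by
  have hD := isLStable_degClass (F := ZMod p) k
  refine subset_antisymm (Set.sInter_subset_of_mem ⟨⟨hD.comp_affine, hD.affine_comp⟩, h₁⟩) ?_
  rintro ⟨m, g⟩ (hg : HasDegLE g k) K ⟨⟨hK₁, hK₂⟩, hf⟩
  have hK : IsLStable K := ⟨hK₁, hK₂⟩
  cases k with
  | zero =>
    obtain ⟨c, rfl⟩ := hasDegLE_zero_iff.1 hg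
    exact hK.const_mem ⟨_, hf⟩ m c
  | succ k =>
    obtain ⟨q, hq, hqf⟩ := h₁
    obtain ⟨r, hr, hrq, hr_lt⟩ := q.exists_exponents_lt_card_eval_eq
    have hrf : ∀ a, eval a r = f a := fun a => (hrq a).trans (hqf a)
    have hr_deg : r.totalDegree = k + 1 := le_antisymm (hr.trans hq) (h₂ _ ⟨r, le_rfl, hrf⟩)
    obtain ⟨d, hd, hdk⟩ := exists_mem_support_sum_eq_totalDegree (q := r)
      (by rintro rfl; simp at hr_deg)
    have hfac := natCast_prod_factorial_ne_zero (F := ZMod p) Fact.out univ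
      fun i _ => ZMod.card p ▸ hr_lt d hd i
    exact hK.degClass_succ_subset ⟨_, hf⟩
      (hK.prod_mem hf hrf hr_deg.le hd (hdk.trans hr_deg) hfac) hg
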